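/- Let $\Gamma > 0$, $\Delta \in \mathbb{R}$, $\eta_0 > 0$, $\mathcal{L} = [1+(2\Delta/\Gamma)^2]^{-1}$, $t_g = -\frac{\eta_0}{\Gamma}\mathcal{L}^2[1 - (2\Delta/\Gamma)^2]$, and $t_W = \frac{2}{\Gamma}\mathcal{L}$. Then $t_W + \frac{\int_0^{\eta_0} e^{-\eta'\mathcal{L}}\, t_g(\eta')\, d\eta'}{\int_0^{\eta_0} e^{-\eta'\mathcal{L}}\, d\eta'} = \frac{1}{\Gamma} - \frac{e^{-\eta_0\mathcal{L}}}{1 - e^{-\eta_0\mathcal{L}}}\, t_g$, where $t_g(\eta') = -\frac{\eta'}{\Gamma}\mathcal{L}^2[1-(2\Delta/\Gamma)^2]$ denotes the group delay at optical depth $\eta'$. -/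

import Mathlib

/-!
The group delay is linear in the depth, `t_g(η) = -(ℒ²(1 - x²)/Γ) η` with `x = 2Δ/Γ`, so its
average is that slope times the mean depth `⟨η⟩ = 1/ℒ - η₀ e^{-η₀ℒ}/(1 - e^{-η₀ℒ})` of the
truncated exponential weight. Since `ℒ(1 - x²) = 2ℒ - 1`, the `1/ℒ` part contributes
`-(2ℒ - 1)/Γ`, which together with `t_W = 2ℒ/Γ` leaves `1/Γ`; the remaining part is exactly
`-e^{-η₀ℒ}/(1 - e^{-η₀ℒ}) · t_g(η₀)`.
-/

open intervalIntegral

theorem one_sub_exp_neg_mul_ne_zero {a c : ℝ} (ha : a ≠ 0) (hc : c ≠ 0) :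
    1 - Real.exp (-a * c) ≠ 0 := by
  rw [sub_ne_zero, ne_comm, Ne, Real.exp_eq_one_iff]
  simpa using mul_ne_zero ha hc

theorem integral_exp_neg_mul {c : ℝ} (hc : c ≠ 0) (a : ℝ) :
    ∫ η in (0:ℝ)..a, Real.exp (-η * c) = (1 - Real.exp (-a * c)) / c := by
  have hderiv : ∀ x ∈ Set.uIcc (0:ℝ) a,
      HasDerivAt (fun η => -Real.exp (-η * c) / c) (Real.exp (-x * c)) x := by
    intro x _
    have hlin : HasDerivAt (fun η : ℝ => -η * c) (-c) x := by
      simpa using (hasDerivAt_neg x).mul_const c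
    refine ((Real.hasDerivAt_exp _).comp x hlin).neg.div_const c |>.congr_deriv ?_
    field_simp
  rw [integral_eq_sub_of_hasDerivAt hderiv ((by fun_prop : Continuous _).intervalIntegrable _ _)]
  simp only [neg_zero, zero_mul, Real.exp_zero]
  ring

theorem integral_mul_exp_neg_mul {c : ℝ} (hc : c ≠ 0) (a : ℝ) :
    ∫ η in (0:ℝ)..a, η * Real.exp (-η * c)
      = (1 - (1 + a * c) * Real.exp (-a * c)) / c ^ 2 := by
  have hderiv : ∀ x ∈ Set.uIcc (0:ℝ) a,
      HasDerivAt (fun η => -((1 + η * c) * Real.exp (-η * c)) / c ^ 2)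
        (x * Real.exp (-x * c)) x := by
    intro x _
    have hlin : HasDerivAt (fun η : ℝ => -η * c) (-c) x := by
      simpa using (hasDerivAt_neg x).mul_const c
    have hfactor : HasDerivAt (fun η : ℝ => 1 + η * c) c x := by
      simpa using ((hasDerivAt_id x).mul_const c).const_add 1
    refine (hfactor.mul ((Real.hasDerivAt_exp _).comp x hlin)).neg.div_const (c ^ 2)
      |>.congr_deriv ?_
    simp only [Function.comp_apply]
    field_simp
    ring
  rw [integral_eq_sub_of_hasDerivAt hderiv ((by fun_prop : Continuous _).intervalIntegrable _ _)]
  simp only [neg_zero, zero_mul, add_zero, one_mul, Real.exp_zero]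
  ring

theorem integral_mul_exp_neg_mul_div_integral_exp_neg_mul {c a : ℝ} (hc : c ≠ 0) (ha : a ≠ 0) :
    (∫ η in (0:ℝ)..a, η * Real.exp (-η * c)) / ∫ η in (0:ℝ)..a, Real.exp (-η * c)
      = 1 / c - a * Real.exp (-a * c) / (1 - Real.exp (-a * c)) := by
  have hE := one_sub_exp_neg_mul_ne_zero ha hc
  rw [integral_mul_exp_neg_mul hc, integral_exp_neg_mul hc]
  generalize Real.exp (-a * c) = E at hE ⊢
  field_simp
  ring

theorem inv_one_add_sq_mul_one_sub_sq (x : ℝ) :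
    (1 + x ^ 2)⁻¹ * (1 - x ^ 2) = 2 * (1 + x ^ 2)⁻¹ - 1 := by
  field_simp
  ring

theorem stmt9_general (Γ Δ η₀ : ℝ) (hη₀ : 0 < η₀) :
    let ℒ : ℝ := (1 + (2 * Δ / Γ)^2)⁻¹
    let tg : ℝ → ℝ := fun η' => -(η' / Γ) * ℒ^2 * (1 - (2 * Δ / Γ)^2)
    let tW : ℝ := (2 / Γ) * ℒ
    tW + (∫ η' in (0:ℝ)..η₀, Real.exp (-η' * ℒ) * tg η')
          / (∫ η' in (0:ℝ)..η₀, Real.exp (-η' * ℒ))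
      = 1 / Γ - (Real.exp (-η₀ * ℒ) / (1 - Real.exp (-η₀ * ℒ))) * tg η₀ := by
  intro ℒ tg tW
  have hℒ : ℒ ≠ 0 := by positivity
  have hshape : ℒ * (1 - (2 * Δ / Γ) ^ 2) = 2 * ℒ - 1 := inv_one_add_sq_mul_one_sub_sq _
  have hmean := integral_mul_exp_neg_mul_div_integral_exp_neg_mul hℒ hη₀.ne'
  have hE := one_sub_exp_neg_mul_ne_zero hη₀.ne' hℒ
  simp only [tW, tg]
  clear_value ℒ
  generalize 2 * Δ / Γ = x at hshape ⊢
  have hweight : ∀ η', Real.exp (-η' * ℒ) * (-(η' / Γ) * ℒ ^ 2 * (1 - x ^ 2))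
      = -(ℒ ^ 2 * (1 - x ^ 2) / Γ) * (η' * Real.exp (-η' * ℒ)) := fun η' => by ring
  simp only [hweight, integral_const_mul]
  rw [mul_div_assoc, hmean]
  generalize Real.exp (-η₀ * ℒ) = E at hE ⊢
  field_simp
  congr 1
  linear_combination (E - 1) * hshape

/-- The scattered-photon time delay (Wigner delay plus the depth-averaged group delay)
equals the scattered-photon atomic excitation time:
`t_W + (∫₀^{η₀} e^{-η'ℒ} t_g(η') dη')/(∫₀^{η₀} e^{-η'ℒ} dη')
  = 1/Γ - e^{-η₀ℒ}/(1-e^{-η₀ℒ}) · t_g(η₀)`. -/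
theorem stmt9 (Γ Δ η₀ : ℝ) (hΓ : 0 < Γ) (hη₀ : 0 < η₀) :
    let ℒ : ℝ := (1 + (2 * Δ / Γ)^2)⁻¹
    let tg : ℝ → ℝ := fun η' => -(η' / Γ) * ℒ^2 * (1 - (2 * Δ / Γ)^2)
    let tW : ℝ := (2 / Γ) * ℒ
    tW + (∫ η' in (0:ℝ)..η₀, Real.exp (-η' * ℒ) * tg η')
          / (∫ η' in (0:ℝ)..η₀, Real.exp (-η' * ℒ))
      = 1 / Γ - (Real.exp (-η₀ * ℒ) / (1 - Real.exp (-η₀ * ℒ))) * tg η₀ :=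
  stmt9_general Γ Δ η₀ hη₀
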